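/- Subject Expansion: in the strict λ-calculus, if Γ; Ω; Δ ⊢ M : A →ᵏ B for any label k ∈ {1, 0, u}, then the η-expansion satisfies Γ; Ω; Δ ⊢ λxᵏ:A. M xᵏ : A →ᵏ B (for x fresh). -/

import Mathlib

/- A strict λ-calculus with strict (1), irrelevant (0) and unrestricted (u)
   function spaces, in locally nameless representation.  Contexts are finite
   sets of (variable name, type) declarations, split into three zones
   Γ (unrestricted); Ω (irrelevant); Δ (strict). -/

/-- Labels `k ::= 1 | 0 | u`. -/
inductive Lab : Type
  | one
  | zero
  | un
deriving DecidableEq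

/-- Types `A ::= a | A₁ →ᵏ A₂` over atomic types `a` (names in ℕ). -/
inductive Ty : Type
  | atom : ℕ → Ty
  | arr : Ty → Lab → Ty → Ty
deriving DecidableEq

/-- Terms `M ::= c | x | λxᵏ:A.M | M Nᵏ` (locally nameless: bound variables
    are de Bruijn indices, free variables/parameters are names). -/
inductive Tm : Type
  | const : ℕ → Tm
  | bvar : ℕ → Tm
  | fvar : ℕ → Tm
  | lam : Lab → Ty → Tm → Tm
  | app : Tm → Lab → Tm → Tm
deriving DecidableEq

/-- Opening: replace the bound variable `k` by the term `u`. -/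
def Tm.openRec (k : ℕ) (u : Tm) : Tm → Tm
  | .const c => .const c
  | .bvar i => if i = k then u else .bvar i
  | .fvar x => .fvar x
  | .lam l A M => .lam l A (Tm.openRec (k+1) u M)
  | .app M l N => .app (Tm.openRec k u M) l (Tm.openRec k u N)

/-- `M.open0 N` is the body `M` of an abstraction with its bound variable
    replaced by `N`; since free variables are named, this is
    capture-avoiding substitution of the bound variable by construction. -/
def Tm.open0 (M u : Tm) : Tm := Tm.openRec 0 u M

/-- A context zone: a finite set of declarations `x : A`. -/
abbrev Ctx : Type := Finset (ℕ × Ty)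

/-- The variables declared in a context. -/
def Ctx.names (Γ : Ctx) : Finset ℕ := Γ.image Prod.fst

/-- The typing judgment `Γ; Ω; Δ ⊢ M : A` of the strict λ-calculus,
    over a fixed signature `Sg` assigning types to constants
    (a function, so each constant is declared at most once). -/
inductive Typ (Sg : ℕ → Option Ty) : Ctx → Ctx → Ctx → Tm → Ty → Prop
  | con {Γ Ω : Ctx} {c : ℕ} {A : Ty} :
      Sg c = some A → Typ Sg Γ Ω ∅ (.const c) A
  | idu {Γ Ω : Ctx} {x : ℕ} {A : Ty} :
      (x, A) ∈ Γ → Typ Sg Γ Ω ∅ (.fvar x) A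
  | id1 {Γ Ω : Ctx} {x : ℕ} {A : Ty} :
      Typ Sg Γ Ω {(x, A)} (.fvar x) A
  | lamu {Γ Ω Δ : Ctx} {x : ℕ} {A B : Ty} {M : Tm} :
      x ∉ Ctx.names (Γ ∪ Ω ∪ Δ) →
      Typ Sg (insert (x, A) Γ) Ω Δ (Tm.open0 M (.fvar x)) B →
      Typ Sg Γ Ω Δ (.lam .un A M) (.arr A .un B)
  | lam0 {Γ Ω Δ : Ctx} {x : ℕ} {A B : Ty} {M : Tm} :
      x ∉ Ctx.names (Γ ∪ Ω ∪ Δ) →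
      Typ Sg Γ (insert (x, A) Ω) Δ (Tm.open0 M (.fvar x)) B →
      Typ Sg Γ Ω Δ (.lam .zero A M) (.arr A .zero B)
  | lam1 {Γ Ω Δ : Ctx} {x : ℕ} {A B : Ty} {M : Tm} :
      x ∉ Ctx.names (Γ ∪ Ω ∪ Δ) →
      Typ Sg Γ Ω (insert (x, A) Δ) (Tm.open0 M (.fvar x)) B →
      Typ Sg Γ Ω Δ (.lam .one A M) (.arr A .one B)
  | appu {Γ Ω Δ : Ctx} {M N : Tm} {A B : Ty} :
      Typ Sg Γ Ω Δ M (.arr A .un B) →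
      Typ Sg (Γ ∪ Δ) Ω ∅ N A →
      Typ Sg Γ Ω Δ (.app M .un N) B
  | app0 {Γ Ω Δ : Ctx} {M N : Tm} {A B : Ty} :
      Typ Sg Γ Ω Δ M (.arr A .zero B) →
      Typ Sg (Γ ∪ Ω ∪ Δ) ∅ ∅ N A →
      Typ Sg Γ Ω Δ (.app M .zero N) B
  | app1 {Γ Ω ΔM ΔN : Ctx} {M N : Tm} {A B : Ty} :
      Disjoint ΔM ΔN →
      Typ Sg (Γ ∪ ΔN) Ω ΔM M (.arr A .one B) →
      Typ Sg (Γ ∪ ΔM) Ω ΔN N A →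
      Typ Sg Γ Ω (ΔM ∪ ΔN) (.app M .one N) B

/-!
Typable terms are locally closed, so opening `M (bvar 0)` at a fresh `x` yields `M x`, and the
η-expansion is typed by the elimination rule for the label once `M` is typed with `x : A` added
to the zone that rule asks for (`Γ` for `u` and `1`, `Ω` for `0`). That is weakening by a fresh
variable. The abstraction rules fix one witness, which may coincide with `x` and may even occur
free in the body, so it cannot just be renamed away; instead, under a binder we weaken by a
variable `w` fresh for everything and then swap `x` and `w`, using that typing is equivariant
under permutations of names.
-/

open Finset

theorem exists_swap_notMem_insert {α : Type*} [DecidableEq α] [Infinite α] {s : Finset α}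
    {y : α} (hy : y ∉ s) (x : α) (t : Finset α) :
    ∃ w, w ∉ s ∧ w ∉ t ∧ w ≠ y ∧ Equiv.swap x w y ∉ insert x s := by
  obtain ⟨w, hw⟩ := Infinite.exists_notMem_finset (s ∪ t ∪ {x, y})
  simp only [mem_union, mem_insert, mem_singleton, not_or] at hw
  obtain ⟨⟨hws, hwt⟩, hwx, hwy⟩ := hw
  refine ⟨w, hws, hwt, hwy, ?_⟩
  rcases eq_or_ne y x with rfl | hyx
  · simpa [hwx] using hws
  · simpa [Equiv.swap_apply_of_ne_of_ne hyx (Ne.symm hwy), hyx] using hy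

namespace Tm

def fv : Tm → Finset ℕ
  | .const _ => ∅
  | .bvar _ => ∅
  | .fvar x => {x}
  | .lam _ _ M => M.fv
  | .app M _ N => M.fv ∪ N.fv

theorem fv_openRec_subset (M : Tm) (k : ℕ) (u : Tm) :
    (openRec k u M).fv ⊆ M.fv ∪ u.fv := by
  induction M generalizing k with
  | bvar i => by_cases i = k <;> simp [openRec, fv, *]
  | lam _ _ M ih => exact ih (k + 1)
  | app M _ N ihM ihN =>
    simp only [openRec, fv]
    grind [ihM k, ihN k]
  | _ => simp [openRec, fv]

theorem notMem_fv_open0 {M : Tm} {w y : ℕ} (hwM : w ∉ M.fv) (hwy : w ≠ y) :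
    w ∉ (M.open0 (.fvar y)).fv := fun h => by
  simpa [fv, hwM, hwy] using fv_openRec_subset M 0 _ h

theorem openRec_eq_self_of_openRec_openRec {i j : ℕ} (hij : i ≠ j) (u v : Tm) (M : Tm)
    (h : openRec i u (openRec j v M) = openRec j v M) : openRec i u M = M := by
  induction M generalizing i j with
  | bvar n =>
    by_cases hn : n = j
    · simp [openRec, hn, Ne.symm hij]
    · simpa [openRec, hn] using h
  | lam l A M ih =>
    simp only [openRec, lam.injEq, true_and] at h ⊢
    exact ih (by omega) h
  | app M l N ihM ihN =>
    simp only [openRec, app.injEq, true_and] at h ⊢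
    exact ⟨ihM hij h.1, ihN hij h.2⟩
  | _ => rfl

def rename (π : Equiv.Perm ℕ) : Tm → Tm
  | .const c => .const c
  | .bvar i => .bvar i
  | .fvar x => .fvar (π x)
  | .lam l A M => .lam l A (M.rename π)
  | .app M l N => .app (M.rename π) l (N.rename π)

theorem rename_openRec (π : Equiv.Perm ℕ) (M : Tm) (k : ℕ) (u : Tm) :
    (openRec k u M).rename π = openRec k (u.rename π) (M.rename π) := by
  induction M generalizing k with
  | bvar i => by_cases i = k <;> simp [rename, openRec, *]
  | _ => simp [rename, openRec, *]

theorem rename_eq_self {π : Equiv.Perm ℕ} {M : Tm} (h : ∀ x ∈ M.fv, π x = x) :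
    M.rename π = M := by
  induction M with
  | fvar x => simpa [rename, fv] using h
  | lam l A M ih => simpa [rename, fv] using ih h
  | app M l N ihM ihN =>
    simp only [fv, mem_union] at h
    simp [rename, ihM fun x hx => h x (.inl hx), ihN fun x hx => h x (.inr hx)]
  | _ => rfl

theorem rename_swap_open0 {M : Tm} {x w : ℕ} (hx : x ∉ M.fv) (hw : w ∉ M.fv) (y : ℕ) :
    (M.open0 (.fvar y)).rename (Equiv.swap x w) = M.open0 (.fvar (Equiv.swap x w y)) := by
  rw [open0, rename_openRec, rename_eq_self fun _ hz => Equiv.swap_apply_of_ne_of_ne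
    (ne_of_mem_of_not_mem hz hx) (ne_of_mem_of_not_mem hz hw)]
  rfl

end Tm

namespace Ctx

def rename (π : Equiv.Perm ℕ) (Γ : Ctx) : Ctx :=
  Γ.map (π.prodCongr (Equiv.refl Ty)).toEmbedding

variable (π : Equiv.Perm ℕ) (x : ℕ) (A : Ty) (Γ Δ : Ctx)

@[simp] theorem rename_empty : (∅ : Ctx).rename π = ∅ := rfl

@[simp] theorem rename_insert : (insert (x, A) Γ).rename π = insert (π x, A) (Γ.rename π) := by
  simp [rename]

@[simp] theorem rename_union : (Γ ∪ Δ).rename π = Γ.rename π ∪ Δ.rename π := by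
  simp [rename, map_union]

@[simp] theorem mem_rename : (π x, A) ∈ Γ.rename π ↔ (x, A) ∈ Γ := by
  simp [rename]

@[simp] theorem names_union : (Γ ∪ Δ).names = Γ.names ∪ Δ.names := image_union ..

@[simp] theorem names_insert : (insert (x, A) Γ).names = insert x Γ.names := image_insert ..

theorem names_rename : (Γ.rename π).names = Γ.names.map π.toEmbedding := by
  simp [names, rename, map_eq_image, image_image, Function.comp_def]

variable {π Γ}

theorem rename_eq_self (h : ∀ x ∈ Γ.names, π x = x) : Γ.rename π = Γ := by
  rw [rename, map_eq_image]
  refine (image_congr fun p hp => ?_).trans image_id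
  simp [Prod.map, h p.1 (mem_image_of_mem _ hp)]

theorem rename_swap_eq_self {x w : ℕ} (hx : x ∉ Γ.names) (hw : w ∉ Γ.names) :
    Γ.rename (Equiv.swap x w) = Γ :=
  rename_eq_self fun _ hz => Equiv.swap_apply_of_ne_of_ne (ne_of_mem_of_not_mem hz hx)
    (ne_of_mem_of_not_mem hz hw)

end Ctx

namespace Typ

variable {Sg : ℕ → Option Ty} {Γ Ω Δ : Ctx} {M : Tm} {A : Ty}

theorem rename (π : Equiv.Perm ℕ) (h : Typ Sg Γ Ω Δ M A) :
    Typ Sg (Γ.rename π) (Ω.rename π) (Δ.rename π) (M.rename π) A := by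
  induction h with
  | con hc => exact .con hc
  | idu hx => exact .idu ((Ctx.mem_rename ..).2 hx)
  | id1 => simpa using .id1
  | lamu hx _ ih =>
    refine .lamu (x := π _) ?_ (by simpa [Tm.open0, Tm.rename_openRec, Tm.rename] using ih)
    simpa [Ctx.names_rename] using hx
  | lam0 hx _ ih =>
    refine .lam0 (x := π _) ?_ (by simpa [Tm.open0, Tm.rename_openRec, Tm.rename] using ih)
    simpa [Ctx.names_rename] using hx
  | lam1 hx _ ih =>
    refine .lam1 (x := π _) ?_ (by simpa [Tm.open0, Tm.rename_openRec, Tm.rename] using ih)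
    simpa [Ctx.names_rename] using hx
  | appu _ _ ihM ihN => exact .appu ihM (by simpa using ihN)
  | app0 _ _ ihM ihN => exact .app0 ihM (by simpa using ihN)
  | app1 hd _ _ ihM ihN =>
    simp only [Ctx.rename_union] at ihM ihN ⊢
    exact .app1 ((disjoint_map _).2 hd) ihM ihN

theorem openRec_eq_self (h : Typ Sg Γ Ω Δ M A) (k : ℕ) (u : Tm) : Tm.openRec k u M = M := by
  induction h generalizing k with
  | lamu _ _ ih | lam0 _ _ ih | lam1 _ _ ih =>
    simpa [Tm.openRec] using Tm.openRec_eq_self_of_openRec_openRec (by omega) _ _ _ (ih (k + 1))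
  | appu _ _ ihM ihN | app0 _ _ ihM ihN | app1 _ _ _ ihM ihN => simp [Tm.openRec, ihM, ihN]
  | _ => rfl

theorem weaken (h : Typ Sg Γ Ω Δ M A) {x : ℕ} (hx : x ∉ (Γ ∪ Ω ∪ Δ).names) (hxM : x ∉ M.fv)
    (C : Ty) : Typ Sg (insert (x, C) Γ) Ω Δ M A ∧ Typ Sg Γ (insert (x, C) Ω) Δ M A := by
  induction h generalizing x with
  | con hc => exact ⟨.con hc, .con hc⟩
  | idu hmem => exact ⟨.idu (mem_insert_of_mem hmem), .idu hmem⟩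
  | id1 => exact ⟨.id1, .id1⟩
  | @lamu Γ Ω Δ y A B M hy _ ih =>
    obtain ⟨w, hwn, hwM, hwy, hy'⟩ := exists_swap_notMem_insert hy x M.fv
    have IH := ih (x := w) (by simpa [hwy] using hwn) (Tm.notMem_fv_open0 hwM hwy)
    have hM := Tm.rename_swap_open0 (M := M) hxM hwM
    simp only [Ctx.names_union, mem_union, not_or] at hx hwn
    refine ⟨.lamu (by simpa using hy') ?_, .lamu (by simpa using hy') ?_⟩
    · rw [insert_comm]
      simpa [Ctx.rename_swap_eq_self, hM, *] using IH.1.rename (Equiv.swap x w)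
    · simpa [Ctx.rename_swap_eq_self, hM, *] using IH.2.rename (Equiv.swap x w)
  | @lam0 Γ Ω Δ y A B M hy _ ih =>
    obtain ⟨w, hwn, hwM, hwy, hy'⟩ := exists_swap_notMem_insert hy x M.fv
    have IH := ih (x := w) (by simpa [hwy] using hwn) (Tm.notMem_fv_open0 hwM hwy)
    have hM := Tm.rename_swap_open0 (M := M) hxM hwM
    simp only [Ctx.names_union, mem_union, not_or] at hx hwn
    refine ⟨.lam0 (by simpa using hy') ?_, .lam0 (by simpa using hy') ?_⟩
    · simpa [Ctx.rename_swap_eq_self, hM, *] using IH.1.rename (Equiv.swap x w)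
    · rw [insert_comm]
      simpa [Ctx.rename_swap_eq_self, hM, *] using IH.2.rename (Equiv.swap x w)
  | @lam1 Γ Ω Δ y A B M hy _ ih =>
    obtain ⟨w, hwn, hwM, hwy, hy'⟩ := exists_swap_notMem_insert hy x M.fv
    have IH := ih (x := w) (by simpa [hwy] using hwn) (Tm.notMem_fv_open0 hwM hwy)
    have hM := Tm.rename_swap_open0 (M := M) hxM hwM
    simp only [Ctx.names_union, mem_union, not_or] at hx hwn
    refine ⟨.lam1 (by simpa using hy') ?_, .lam1 (by simpa using hy') ?_⟩
    · simpa [Ctx.rename_swap_eq_self, hM, *] using IH.1.rename (Equiv.swap x w)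
    · simpa [Ctx.rename_swap_eq_self, hM, *] using IH.2.rename (Equiv.swap x w)
  | appu _ _ ihM ihN =>
    simp only [Tm.fv, mem_union, not_or] at hxM
    have hN := ihN (x := x) (by simpa [or_comm, or_left_comm] using hx) hxM.2
    exact ⟨.appu (ihM hx hxM.1).1 (by simpa [insert_union] using hN.1),
      .appu (ihM hx hxM.1).2 hN.2⟩
  | app0 _ _ ihM ihN =>
    simp only [Tm.fv, mem_union, not_or] at hxM
    have hN := ihN (x := x) (by simpa using hx) hxM.2
    exact ⟨.app0 (ihM hx hxM.1).1 (by simpa [insert_union] using hN.1),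
      .app0 (ihM hx hxM.1).2 (by simpa [insert_union, union_insert] using hN.1)⟩
  | app1 hd _ _ ihM ihN =>
    simp only [Tm.fv, mem_union, not_or] at hxM
    simp only [Ctx.names_union, mem_union, not_or] at hx
    have hM := ihM (x := x) (by simp [*]) hxM.1
    have hN := ihN (x := x) (by simp [*]) hxM.2
    exact ⟨.app1 hd (by simpa [insert_union] using hM.1) (by simpa [insert_union] using hN.1),
      .app1 hd hM.2 hN.2⟩

end Typ

-- In locally nameless syntax the η-bound variable is the index `0`, so it is fresh by construction.
/-- **Subject Expansion.**  If `Γ; Ω; Δ ⊢ M : A →ᵏ B` for any label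
    `k ∈ {1,0,u}`, then the η-expansion satisfies
    `Γ; Ω; Δ ⊢ λxᵏ:A. M xᵏ : A →ᵏ B` (locally nameless: the bound variable
    is the index `0`, hence automatically fresh). -/
theorem subject_expansion (Sg : ℕ → Option Ty) (Γ Ω Δ : Ctx) (M : Tm)
    (A B : Ty) (k : Lab)
    (h : Typ Sg Γ Ω Δ M (.arr A k B)) :
    Typ Sg Γ Ω Δ (.lam k A (.app M k (.bvar 0))) (.arr A k B) := by
  obtain ⟨x, hx⟩ := Infinite.exists_notMem_finset ((Γ ∪ Ω ∪ Δ).names ∪ M.fv)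
  rw [mem_union, not_or] at hx
  obtain ⟨hxn, hxM⟩ := hx
  have hopen : (Tm.app M k (.bvar 0)).open0 (.fvar x) = .app M k (.fvar x) := by
    simp [Tm.open0, Tm.openRec, h.openRec_eq_self]
  obtain ⟨hMu, hM0⟩ := h.weaken hxn hxM A
  cases k with
  | un => exact .lamu hxn (hopen ▸ .appu hMu (.idu (by simp)))
  | zero => exact .lam0 hxn (hopen ▸ .app0 hM0 (.idu (by simp)))
  | one =>
    have hxΔ : Disjoint Δ {(x, A)} := disjoint_singleton_right.2 fun hmem =>
      hxn (mem_image_of_mem Prod.fst (mem_union_right _ hmem))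
    have hMΓ : Typ Sg (Γ ∪ {(x, A)}) Ω Δ M (.arr A .one B) := by
      simpa [union_comm, ← insert_eq] using hMu
    refine .lam1 hxn (hopen ▸ ?_)
    simpa [union_comm, ← insert_eq] using Typ.app1 hxΔ hMΓ .id1
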